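/- arXiv:2510.03560 — 11 statements merged into one kernel-verified Lean document; each statement's English description precedes it below -/
import Mathlib

section
/- Let q be a power of an odd prime, n a positive integer, and write q^n - 1 = l·s for positive integers l, s. Let f be a polynomial over F_{q^n}, let r₁ be a positive integer, and let S : F_{q^n} → F_{q^n} be the map S(x) = x^{q^{r₁}}·f(x^{s·q^{r₁}}). Suppose S is scattered of index t over F_{q^n} for some 0 ≤ t ≤ n-1. Then for all nonzero y, z ∈ F_{q^n} satisfying S(y)·z^{q^t} = S(z)·y^{q^t}, one has f(y^{s·q^{r₁}}) = f(z^{s·q^{r₁}}). -/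
/-!
If `S(y) z^{q^t} = S(z) y^{q^t}`, scatteredness gives `c = y/z ∈ F_q`, so `c` is fixed by every
power of the `q`-Frobenius: `y^{q^r₁} = c z^{q^r₁}` and `y^{q^t} = c z^{q^t}`. Substituting,
both sides of the equation carry the same nonzero factor `c z^{q^r₁} z^{q^t}`, and cancelling it
leaves `f(y^{s q^{r₁}}) = f(z^{s q^{r₁}})`.
-/

/-- A map `S : L → L` on the field `L = F_{q^n}` is scattered of index `t` over
`F_{q^n}/F_q` if for all nonzero `y, z`, `S(y)/y^{q^t} = S(z)/z^{q^t}` implies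
`y/z ∈ F_q`.  Here membership of `y/z` in the subfield `F_q` is expressed by its
characterization as the fixed field of the `q`-power Frobenius: `(y/z)^q = y/z`. -/
def IsScattered (q t : ℕ) {L : Type} [Field L] (S : L → L) : Prop :=
  ∀ y z : L, y ≠ 0 → z ≠ 0 → S y * z ^ q ^ t = S z * y ^ q ^ t → (y / z) ^ q = y / z

theorem pow_pow_eq_self_of_pow_eq_self {M : Type*} [Monoid M] {c : M} {q : ℕ}
    (hc : c ^ q = c) (k : ℕ) : c ^ q ^ k = c := by
  induction k with
  | zero => simp
  | succ k ih => rw [pow_succ, pow_mul, ih, hc]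

theorem eq_of_pow_mul_eq_of_div_pow_eq_self {K : Type*} [Field K] {q r t : ℕ} {y z a b : K}
    (hy : y ≠ 0) (hz : z ≠ 0) (hyz : (y / z) ^ q = y / z)
    (h : y ^ q ^ r * a * z ^ q ^ t = z ^ q ^ r * b * y ^ q ^ t) : a = b := by
  set c := y / z
  have hy_eq : y = c * z := (div_mul_cancel₀ y hz).symm
  have hFrob (k : ℕ) : y ^ q ^ k = c * z ^ q ^ k := by
    rw [hy_eq, mul_pow, pow_pow_eq_self_of_pow_eq_self hyz]
  rw [hFrob r, hFrob t] at h
  have hfactor : c * z ^ q ^ r * z ^ q ^ t ≠ 0 := by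
    have hc : c ≠ 0 := div_ne_zero hy hz
    positivity
  apply mul_left_cancel₀ hfactor
  linear_combination h

theorem stmt2_general (q s : ℕ)
    (L : Type) [Field L]
    (f : Polynomial L) (r₁ : ℕ)
    (t : ℕ)
    (hS : IsScattered q t
      (fun x : L => x ^ q ^ r₁ * Polynomial.eval (x ^ (s * q ^ r₁)) f)) :
    ∀ y z : L, y ≠ 0 → z ≠ 0 →
      (y ^ q ^ r₁ * Polynomial.eval (y ^ (s * q ^ r₁)) f) * z ^ q ^ t
        = (z ^ q ^ r₁ * Polynomial.eval (z ^ (s * q ^ r₁)) f) * y ^ q ^ t →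
      Polynomial.eval (y ^ (s * q ^ r₁)) f = Polynomial.eval (z ^ (s * q ^ r₁)) f :=
  fun y z hy hz h => eq_of_pow_mul_eq_of_div_pow_eq_self hy hz (hS y z hy hz h) h

/-- Let q be a power of an odd prime, n a positive integer,
q^n - 1 = l·s, f a polynomial over F_{q^n}, r₁ a positive integer, and
S(x) = x^{q^{r₁}}·f(x^{s·q^{r₁}}).  If S is scattered of index t (0 ≤ t ≤ n-1),
then for all nonzero y, z with S(y)·z^{q^t} = S(z)·y^{q^t} one has
f(y^{s·q^{r₁}}) = f(z^{s·q^{r₁}}). -/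
theorem stmt2 (q n l s : ℕ)
    (hq : ∃ p m : ℕ, p.Prime ∧ Odd p ∧ 0 < m ∧ q = p ^ m)
    (hn : 0 < n) (hl : 0 < l) (hs : 0 < s) (hls : q ^ n - 1 = l * s)
    (L : Type) [Field L] [Fintype L] (hcard : Fintype.card L = q ^ n)
    (f : Polynomial L) (r₁ : ℕ) (hr₁ : 0 < r₁)
    (t : ℕ) (ht : t ≤ n - 1)
    (hS : IsScattered q t
      (fun x : L => x ^ q ^ r₁ * Polynomial.eval (x ^ (s * q ^ r₁)) f)) :
    ∀ y z : L, y ≠ 0 → z ≠ 0 →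
      (y ^ q ^ r₁ * Polynomial.eval (y ^ (s * q ^ r₁)) f) * z ^ q ^ t
        = (z ^ q ^ r₁ * Polynomial.eval (z ^ (s * q ^ r₁)) f) * y ^ q ^ t →
      Polynomial.eval (y ^ (s * q ^ r₁)) f = Polynomial.eval (z ^ (s * q ^ r₁)) f :=
  stmt2_general q s L f r₁ t hS
end

section
/- Let q be a prime power, n a positive integer, r a positive integer, and t a nonnegative integer with t ≠ r. The map S : F_{q^n} → F_{q^n} given by S(x) = x^{q^r} is scattered of index t over F_{q^n} if and only if gcd(|t - r|, n) = 1. -/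
/-!
Write `φ x = x ^ q` and `d = |t - r|`. On a field with `q ^ n` elements `φ^[n] = id`, so `φ` is
injective and `y ^ q ^ r * z ^ q ^ t = z ^ q ^ r * y ^ q ^ t` says exactly that `y / z` is a
periodic point of `φ` of period `d`. Since every point has period `n`, the points of period `d`
are those of period `g = gcd d n`, so `x ↦ x ^ q ^ r` is scattered of index `t` iff every point of
period `g` is fixed by `φ`. This holds for `g = 1`; for `g > 1` an element of order `q ^ g - 1` in
the cyclic group `Lˣ` has period `g` but is not fixed.
-/

open Function

section Iterate

variable {α : Type*} {f : α → α} {x : α}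

theorem Function.Injective.iterate_add_apply_eq_iff (hf : Injective f) {m n : ℕ} :
    f^[m + n] x = f^[m] x ↔ IsPeriodicPt f n x := by
  rw [iterate_add_apply]
  exact (hf.iterate m).eq_iff

theorem Function.Injective.iterate_apply_eq_iff_isPeriodicPt_dist (hf : Injective f) {m n : ℕ} :
    f^[m] x = f^[n] x ↔ IsPeriodicPt f (Nat.dist n m) x := by
  rcases le_total n m with h | h
  · obtain ⟨k, rfl⟩ := Nat.exists_eq_add_of_le h
    rw [hf.iterate_add_apply_eq_iff, Nat.dist_eq_sub_of_le h, Nat.add_sub_cancel_left]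
  · obtain ⟨k, rfl⟩ := Nat.exists_eq_add_of_le h
    rw [eq_comm, hf.iterate_add_apply_eq_iff, Nat.dist_eq_sub_of_le_right h,
      Nat.add_sub_cancel_left]

theorem Function.injective_of_forall_isPeriodicPt {n : ℕ} (hn : n ≠ 0)
    (h : ∀ x, IsPeriodicPt f n x) : Injective f := by
  obtain ⟨m, rfl⟩ := Nat.exists_eq_succ_of_ne_zero hn
  intro x y hxy
  have := congrArg f^[m] hxy
  rwa [← iterate_succ_apply, ← iterate_succ_apply, (h x).eq, (h y).eq] at this

theorem isPeriodicPt_pow_iff {M : Type*} [Monoid M] {q k : ℕ} {x : M} :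
    IsPeriodicPt (· ^ q) k x ↔ x ^ q ^ k = x := by
  rw [IsPeriodicPt, IsFixedPt, pow_iterate]

end Iterate

section FiniteField

variable {L : Type} [Field L] [Fintype L] {q n : ℕ}

theorem ne_zero_of_card_eq_pow (hcard : Fintype.card L = q ^ n) : n ≠ 0 := by
  rintro rfl
  simpa [hcard] using Fintype.one_lt_card (α := L)

theorem one_lt_of_card_eq_pow (hcard : Fintype.card L = q ^ n) : 1 < q :=
  (Nat.one_lt_pow_iff (ne_zero_of_card_eq_pow hcard)).mp (hcard ▸ Fintype.one_lt_card)

theorem isPeriodicPt_pow_of_card_eq (hcard : Fintype.card L = q ^ n) (x : L) :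
    IsPeriodicPt (· ^ q) n x :=
  isPeriodicPt_pow_iff.mpr (hcard ▸ FiniteField.pow_card x)

theorem injective_pow_of_card_eq (hcard : Fintype.card L = q ^ n) : Injective (· ^ q : L → L) :=
  injective_of_forall_isPeriodicPt (ne_zero_of_card_eq_pow hcard) (isPeriodicPt_pow_of_card_eq hcard)

theorem isPeriodicPt_pow_iff_gcd (hcard : Fintype.card L = q ^ n) {d : ℕ} {x : L} :
    IsPeriodicPt (· ^ q) d x ↔ IsPeriodicPt (· ^ q) (d.gcd n) x :=
  ⟨fun h => h.gcd (isPeriodicPt_pow_of_card_eq hcard x),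
    fun h => h.trans_dvd (Nat.gcd_dvd_left d n)⟩

theorem exists_isPeriodicPt_pow_not_isFixedPt (hcard : Fintype.card L = q ^ n) {g : ℕ}
    (hg : g ∣ n) (hg1 : 1 < g) : ∃ x : L, IsPeriodicPt (· ^ q) g x ∧ ¬IsFixedPt (· ^ q) x := by
  have hq := one_lt_of_card_eq_pow hcard
  obtain ⟨ζ, hζ⟩ := IsCyclic.exists_ofOrder_eq_natCard (α := Lˣ)
  have hdvd : q ^ g - 1 ∣ orderOf ζ := by
    rw [hζ, Nat.card_units, Nat.card_eq_fintype_card, hcard]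
    exact Nat.pow_sub_one_dvd_pow_sub_one q hg
  set u := ζ ^ (orderOf ζ / (q ^ g - 1))
  have hu : orderOf u = q ^ g - 1 := orderOf_pow_orderOf_div (orderOf_pos ζ).ne' hdvd
  have hpow_eq_self (k : ℕ) : (u : L) ^ k = u ↔ k ≡ 1 [MOD q ^ g - 1] := by
    rw [← Units.val_pow_eq_pow_val, Units.val_inj, ← hu, ← pow_eq_pow_iff_modEq, pow_one]
  have hqg : q + 1 < q ^ g := calc
    q + 1 < q * q := by nlinarith
    _ ≤ q ^ g := by rw [← pow_two]; exact Nat.pow_le_pow_right (by omega) hg1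
  refine ⟨u, isPeriodicPt_pow_iff.mpr ?_, ?_⟩
  · exact (hpow_eq_self _).mpr (Nat.modEq_sub (by omega))
  · rw [IsFixedPt, hpow_eq_self, Nat.ModEq, Nat.mod_eq_of_lt (by omega),
      Nat.mod_eq_of_lt (by omega)]
    omega

theorem forall_isPeriodicPt_pow_imp_isFixedPt_iff (hcard : Fintype.card L = q ^ n) {g : ℕ}
    (hg : g ∣ n) : (∀ x : L, IsPeriodicPt (· ^ q) g x → IsFixedPt (· ^ q) x) ↔ g = 1 := by
  refine ⟨fun h => ?_, fun hg1 x hx => by subst hg1; exact hx⟩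
  by_contra hg1
  have hg0 : g ≠ 0 := by
    rintro rfl
    exact ne_zero_of_card_eq_pow hcard (zero_dvd_iff.mp hg)
  obtain ⟨x, hx, hfix⟩ := exists_isPeriodicPt_pow_not_isFixedPt hcard hg (by omega)
  exact hfix (h x hx)

theorem isScattered_pow_pow_iff (hcard : Fintype.card L = q ^ n) {r t : ℕ} :
    IsScattered q t (fun x : L => x ^ q ^ r) ↔
      ∀ x : L, IsPeriodicPt (· ^ q) (Nat.dist t r) x → IsFixedPt (· ^ q) x := by
  have hq : q ≠ 0 := (one_lt_of_card_eq_pow hcard).ne_bot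
  have hpow_eq_pow (x : L) : x ^ q ^ r = x ^ q ^ t ↔ IsPeriodicPt (· ^ q) (Nat.dist t r) x := by
    simpa only [pow_iterate] using
      (injective_pow_of_card_eq hcard).iterate_apply_eq_iff_isPeriodicPt_dist (x := x) (m := r)
        (n := t)
  refine ⟨fun hS x hx => ?_, fun h y z _ hz hyz => h _ ?_⟩
  · rcases eq_or_ne x 0 with rfl | hx0
    · exact zero_pow hq
    · show x ^ q = x
      simpa using hS x 1 hx0 one_ne_zero (by simpa using (hpow_eq_pow x).mpr hx)
  · rw [← hpow_eq_pow, div_pow, div_pow, div_eq_div_iff (pow_ne_zero _ hz) (pow_ne_zero _ hz)]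
    linear_combination hyz

end FiniteField

theorem stmt3_general (q n r t : ℕ)
    (L : Type) [Field L] [Fintype L] (hcard : Fintype.card L = q ^ n) :
    IsScattered q t (fun x : L => x ^ q ^ r) ↔ Nat.gcd (Nat.dist t r) n = 1 := by
  rw [isScattered_pow_pow_iff hcard,
    ← forall_isPeriodicPt_pow_imp_isFixedPt_iff hcard (Nat.gcd_dvd_right _ _)]
  exact forall_congr' fun x => imp_congr_left (isPeriodicPt_pow_iff_gcd hcard)

/-- Let q be a prime power, n a positive integer, r a positive
integer, and t a nonnegative integer with t ≠ r.  The map S(x) = x^{q^r} is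
scattered of index t over F_{q^n} iff gcd(|t - r|, n) = 1. -/
theorem stmt3 (q n r t : ℕ) (hq : ∃ p m : ℕ, p.Prime ∧ 0 < m ∧ q = p ^ m)
    (hn : 0 < n) (hr : 0 < r) (htr : t ≠ r)
    (L : Type) [Field L] [Fintype L] (hcard : Fintype.card L = q ^ n) :
    IsScattered q t (fun x : L => x ^ q ^ r) ↔ Nat.gcd (Nat.dist t r) n = 1 :=
  stmt3_general q n r t L hcard
end

section
/- Let q be a power of an odd prime, n a positive integer, 0 < r₁ < r₂ < ⋯ < r_k < n, and a₂, …, a_k nonzero elements of F_{q^n} such that a_i^{q^{r₁}-1} = 1 for all i = 2, …, k. Let S_{r₁}(x) = Σ_{i=2}^{k} a_i x^{q^{r_i}} and S_{r₁}^{r₁}(x) = Σ_{i=2}^{k} a_i x^{q^{r_i - r₁}}, viewed as maps on F_{q^n}. Then S_{r₁} is scattered of index r₁ over F_{q^n} if and only if S_{r₁}^{r₁} is scattered of index 0 over F_{q^n}. -/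
/-- Let q be a power of an odd prime, n a positive integer,
0 < r₁ < r₂ < ⋯ < r_k < n, and a₂, …, a_k nonzero elements of F_{q^n} with
a_i^{q^{r₁}-1} = 1 for i = 2, …, k.  Let S_{r₁}(x) = Σ_{i=2}^k a_i x^{q^{r_i}}
and S_{r₁}^{r₁}(x) = Σ_{i=2}^k a_i x^{q^{r_i - r₁}}.  Then S_{r₁} is scattered
of index r₁ iff S_{r₁}^{r₁} is scattered of index 0.  (Indices: `Fin k`, where
`⟨0, hk⟩` corresponds to the subscript 1, and the sums range over the
subscripts 2, …, k, i.e. over `Finset.univ.erase ⟨0, hk⟩`.) -/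
theorem stmt5 (q n k : ℕ)
    (hq : ∃ p m : ℕ, p.Prime ∧ Odd p ∧ 0 < m ∧ q = p ^ m)
    (hn : 0 < n) (hk : 0 < k)
    (r : Fin k → ℕ) (hmono : StrictMono r)
    (hr0 : 0 < r ⟨0, hk⟩) (hrn : ∀ i, r i < n)
    (L : Type) [Field L] [Fintype L] (hcard : Fintype.card L = q ^ n)
    (a : Fin k → L) (ha : ∀ i : Fin k, i ≠ ⟨0, hk⟩ → a i ≠ 0)
    (hord : ∀ i : Fin k, i ≠ ⟨0, hk⟩ → a i ^ (q ^ r ⟨0, hk⟩ - 1) = 1) :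
    IsScattered q (r ⟨0, hk⟩)
      (fun x : L => ∑ i ∈ Finset.univ.erase ⟨0, hk⟩, a i * x ^ q ^ r i) ↔
    IsScattered q 0
      (fun x : L => ∑ i ∈ Finset.univ.erase ⟨0, hk⟩,
        a i * x ^ q ^ (r i - r ⟨0, hk⟩)) := by
  classical
  obtain ⟨p, m, hp, hodd, hm, hqe⟩ := hq
  haveI : Fact p.Prime := ⟨hp⟩
  set t := r ⟨0, hk⟩ with ht
  -- characteristic of L is p
  haveI hchar : CharP L p := by
    have h1 : CharP L (ringChar L) := ringChar.charP L
    have hp' : (ringChar L).Prime := CharP.char_is_prime L (ringChar L)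
    obtain ⟨s, _, hs⟩ := FiniteField.card L (ringChar L)
    have heq : ringChar L = p := by
      have hdvd : ringChar L ∣ p ^ (m * n) := by
        rw [pow_mul, ← hqe, ← hcard, hs]
        exact dvd_pow_self _ s.pos.ne'
      exact (Nat.prime_dvd_prime_iff_eq hp' hp).mp (hp'.dvd_of_dvd_pow hdvd)
    rwa [heq] at h1
  have hqpos : 0 < q := hqe ▸ pow_pos hp.pos m
  have hq1 : 1 ≤ q ^ t := Nat.one_le_pow _ _ hqpos
  have hF : ∀ x : L, x ^ q ^ t = iterateFrobenius L p (m * t) x := by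
    intro x
    rw [iterateFrobenius_def, hqe, ← pow_mul]
  have hFinj : Function.Injective (iterateFrobenius L p (m * t)) :=
    (iterateFrobenius L p (m * t)).injective
  -- a_i is fixed by the q^t Frobenius
  have hafix : ∀ i : Fin k, i ≠ ⟨0, hk⟩ → a i ^ q ^ t = a i := by
    intro i hi
    calc a i ^ q ^ t = a i ^ (q ^ t - 1) * a i := by
          rw [← pow_succ, Nat.sub_add_cancel hq1]
      _ = a i := by rw [hord i hi, one_mul]
  have hrle : ∀ i : Fin k, i ≠ ⟨0, hk⟩ → t ≤ r i := by
    intro i hi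
    refine le_of_lt (hmono ?_)
    exact Fin.lt_def.mpr (Nat.pos_of_ne_zero (fun h => hi (Fin.ext h)))
  -- the key identity: S(x) = F(S'(x))
  have hkey : ∀ x : L,
      (∑ i ∈ Finset.univ.erase ⟨0, hk⟩, a i * x ^ q ^ r i) =
      iterateFrobenius L p (m * t)
        (∑ i ∈ Finset.univ.erase ⟨0, hk⟩, a i * x ^ q ^ (r i - t)) := by
    intro x
    rw [map_sum]
    refine Finset.sum_congr rfl fun i hi => ?_
    have hi' : i ≠ ⟨0, hk⟩ := Finset.ne_of_mem_erase hi
    rw [map_mul, ← hF, ← hF, hafix i hi', ← pow_mul, ← pow_add,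
      Nat.sub_add_cancel (hrle i hi')]
  constructor
  · intro H y z hy hz hyz
    refine H y z hy hz ?_
    simp only [hkey, hF, pow_zero, pow_one] at hyz ⊢
    rw [← map_mul, ← map_mul]
    exact congrArg _ hyz
  · intro H y z hy hz hyz
    refine H y z hy hz ?_
    simp only [hkey, hF, pow_zero, pow_one] at hyz ⊢
    rw [← map_mul, ← map_mul] at hyz
    exact hFinj hyz
end

section
/- Let q be a power of an odd prime, n a positive integer, 0 < t < r₁ < r₂ < ⋯ < r_k < n, and a₁, …, a_k nonzero elements of F_{q^n} such that a_i^{q^{t}-1} = 1 for all i = 1, …, k. Let S(x) = Σ_{i=1}^{k} a_i x^{q^{r_i}} and S^t(x) = Σ_{i=1}^{k} a_i x^{q^{r_i - t}}, viewed as maps on F_{q^n}. Then S is scattered of index t over F_{q^n} if and only if S^t is scattered of index 0 over F_{q^n}. -/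
/-- Let q be a power of an odd prime, n a positive integer,
0 < t < r₁ < r₂ < ⋯ < r_k < n, and a₁, …, a_k nonzero elements of F_{q^n} with
a_i^{q^t-1} = 1 for all i = 1, …, k.  Let S(x) = Σ_{i=1}^k a_i x^{q^{r_i}} and
S^t(x) = Σ_{i=1}^k a_i x^{q^{r_i - t}}.  Then S is scattered of index t iff
S^t is scattered of index 0.  (Indices: `Fin k`, where `⟨0, hk⟩` corresponds to
the subscript 1.) -/
theorem stmt7 (q n k t : ℕ)
    (hq : ∃ p m : ℕ, p.Prime ∧ Odd p ∧ 0 < m ∧ q = p ^ m)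
    (hn : 0 < n) (hk : 0 < k)
    (r : Fin k → ℕ) (hmono : StrictMono r)
    (ht : 0 < t) (htr : t < r ⟨0, hk⟩) (hrn : ∀ i, r i < n)
    (L : Type) [Field L] [Fintype L] (hcard : Fintype.card L = q ^ n)
    (a : Fin k → L) (ha : ∀ i, a i ≠ 0)
    (hord : ∀ i : Fin k, a i ^ (q ^ t - 1) = 1) :
    IsScattered q t (fun x : L => ∑ i, a i * x ^ q ^ r i) ↔
    IsScattered q 0 (fun x : L => ∑ i, a i * x ^ q ^ (r i - t)) := by
  obtain ⟨p, m, hp, hpodd, hm, hq⟩ := hq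
  have hq0 : 0 < q := by rw [hq]; exact pow_pos hp.pos m
  -- characteristic of L is p
  have hp' : ringChar L = p := by
    haveI : Fact (ringChar L).Prime := ⟨CharP.char_is_prime L _⟩
    obtain ⟨d, -, hd⟩ := FiniteField.card L (ringChar L)
    have h2 : ringChar L ∣ p ^ (m * n) := by
      have he : p ^ (m * n) = ringChar L ^ (d : ℕ) := by
        rw [pow_mul, ← hq, ← hcard, hd]
      rw [he]
      exact dvd_pow_self _ d.ne_zero
    exact (Nat.prime_dvd_prime_iff_eq (CharP.char_is_prime L _) hp).mp
      ((CharP.char_is_prime L _).dvd_of_dvd_pow h2)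
  haveI hchar : CharP L p := hp' ▸ ringChar.charP L
  haveI : ExpChar L p := ExpChar.prime hp
  have hqt : q ^ t = p ^ (m * t) := by rw [hq, ← pow_mul]
  -- x ↦ x^{q^t} is injective
  have hinj : ∀ u v : L, u ^ q ^ t = v ^ q ^ t → u = v := by
    intro u v h
    apply (iterateFrobenius L p (m * t)).injective
    simpa only [iterateFrobenius_def, ← hqt] using h
  have hle : ∀ i : Fin k, t ≤ r i := fun i =>
    (htr.trans_le (hmono.monotone (Fin.le_def.mpr (Nat.zero_le _)))).le
  have key : ∀ x : L,
      (∑ i, a i * x ^ q ^ r i) = (∑ i, a i * x ^ q ^ (r i - t)) ^ q ^ t := by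
    intro x
    rw [hqt, ← iterateFrobenius_def, map_sum]
    refine Finset.sum_congr rfl fun i _ => ?_
    rw [map_mul, iterateFrobenius_def, iterateFrobenius_def, ← hqt]
    have hai : a i ^ q ^ t = a i := by
      have h1 : q ^ t - 1 + 1 = q ^ t := Nat.succ_pred_eq_of_pos (pow_pos hq0 t)
      calc a i ^ q ^ t = a i ^ (q ^ t - 1 + 1) := by rw [h1]
        _ = a i ^ (q ^ t - 1) * a i := pow_succ _ _
        _ = a i := by rw [hord i, one_mul]
    rw [hai, ← pow_mul, ← pow_add, Nat.sub_add_cancel (hle i)]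
  constructor
  · intro hS y z hy hz h
    apply hS y z hy hz
    simp only [pow_zero, pow_one] at h
    dsimp only
    rw [key y, key z, ← mul_pow, ← mul_pow, h]
  · intro hS y z hy hz h
    apply hS y z hy hz
    simp only [pow_zero, pow_one]
    dsimp only at h
    rw [key y, key z, ← mul_pow, ← mul_pow] at h
    exact hinj _ _ h
end

section
/- Let q be a power of an odd prime, n a positive integer, 0 < r₁ < r₂ < ⋯ < r_k < n, let t be an integer with r₁ < t < n, and let a₁, …, a_k be nonzero elements of F_{q^n} such that a_i^{q^{r₁}-1} = 1 for all i = 1, …, k. Let S(x) = Σ_{i=1}^{k} a_i x^{q^{r_i}} and T(x) = a₁x + Σ_{i=2}^{k} a_i x^{q^{r_i - r₁}}, viewed as maps on F_{q^n}. Then S is scattered of index t over F_{q^n} if and only if T is scattered of index t - r₁ over F_{q^n}. -/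
theorem isScattered_iff_of_injective {L : Type} [Field L] {q t t' : ℕ} {S T f : L → L}
    (hf : Function.Injective f) (h : ∀ x w, S x * w ^ q ^ t = f (T x * w ^ q ^ t')) :
    IsScattered q t S ↔ IsScattered q t' T := by
  have hequiv (y z : L) :
      S y * z ^ q ^ t = S z * y ^ q ^ t ↔ T y * z ^ q ^ t' = T z * y ^ q ^ t' := by
    rw [h y z, h z y, hf.eq_iff]
  exact forall₂_congr fun y z => by rw [hequiv]

section Frobenius

variable {L : Type*} [CommRing L] (p : ℕ) [ExpChar L p] (m s : ℕ)

theorem pow_pow_eq_iterateFrobenius (u : L) :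
    u ^ (p ^ m) ^ s = iterateFrobenius L p (m * s) u := by
  rw [iterateFrobenius_def, pow_mul]

theorem pow_pow_injective [IsReduced L] :
    Function.Injective fun u : L => u ^ (p ^ m) ^ s := by
  simpa only [pow_pow_eq_iterateFrobenius] using iterateFrobenius_inj L p (m * s)

variable {p m s}

theorem sum_mul_pow_mul_pow_eq_pow {ι : Type*} (I : Finset ι) (a : ι → L) (r : ι → ℕ)
    {t : ℕ} (hfix : ∀ i ∈ I, a i ^ (p ^ m) ^ s = a i) (hr : ∀ i ∈ I, s ≤ r i)
    (ht : s ≤ t) (x w : L) :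
    (∑ i ∈ I, a i * x ^ (p ^ m) ^ r i) * w ^ (p ^ m) ^ t =
      ((∑ i ∈ I, a i * x ^ (p ^ m) ^ (r i - s)) * w ^ (p ^ m) ^ (t - s)) ^ (p ^ m) ^ s := by
  have hpow (u : L) {e : ℕ} (he : s ≤ e) :
      (u ^ (p ^ m) ^ (e - s)) ^ (p ^ m) ^ s = u ^ (p ^ m) ^ e := by
    rw [← pow_mul, ← pow_add, Nat.sub_add_cancel he]
  rw [pow_pow_eq_iterateFrobenius p m s, map_mul, map_sum, ← pow_pow_eq_iterateFrobenius,
    hpow w ht]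
  congr 1
  refine Finset.sum_congr rfl fun i hi => ?_
  rw [map_mul, ← pow_pow_eq_iterateFrobenius, ← pow_pow_eq_iterateFrobenius, hfix i hi,
    hpow x (hr i hi)]

end Frobenius

theorem stmt8_general (q n k t : ℕ)
    (hq : ∃ p m : ℕ, p.Prime ∧ Odd p ∧ 0 < m ∧ q = p ^ m)
    (hk : 0 < k)
    (r : Fin k → ℕ) (hmono : StrictMono r)
    (htl : r ⟨0, hk⟩ < t)
    (L : Type) [Field L] [Fintype L] (hcard : Fintype.card L = q ^ n)
    (a : Fin k → L)
    (hord : ∀ i : Fin k, a i ^ (q ^ r ⟨0, hk⟩ - 1) = 1) :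
    IsScattered q t (fun x : L => ∑ i, a i * x ^ q ^ r i) ↔
    IsScattered q (t - r ⟨0, hk⟩)
      (fun x : L => a ⟨0, hk⟩ * x +
        ∑ i ∈ Finset.univ.erase ⟨0, hk⟩, a i * x ^ q ^ (r i - r ⟨0, hk⟩)) := by
  obtain ⟨p, m, hp, -, -, rfl⟩ := hq
  have : Fact p.Prime := ⟨hp⟩
  have : CharP L p := charP_of_card_eq_prime_pow (by rw [hcard, ← pow_mul])
  have : ExpChar L p := .prime hp
  set i₀ : Fin k := ⟨0, hk⟩
  have hfix (i : Fin k) : a i ^ (p ^ m) ^ r i₀ = a i := by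
    rw [← Nat.sub_add_cancel (pow_pos (pow_pos hp.pos m) (r i₀)), pow_succ, hord i, one_mul]
  have hT (x : L) :
      a i₀ * x + ∑ i ∈ Finset.univ.erase i₀, a i * x ^ (p ^ m) ^ (r i - r i₀) =
        ∑ i, a i * x ^ (p ^ m) ^ (r i - r i₀) := by
    rw [← Finset.add_sum_erase _ _ (Finset.mem_univ i₀), Nat.sub_self, pow_zero, pow_one]
  refine isScattered_iff_of_injective (pow_pow_injective p m (r i₀)) fun x w => ?_
  rw [hT]
  exact sum_mul_pow_mul_pow_eq_pow _ a r (fun i _ => hfix i)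
    (fun i _ => hmono.monotone (Nat.zero_le i.val)) htl.le x w

/-- Let q be a power of an odd prime, n a positive integer,
0 < r₁ < r₂ < ⋯ < r_k < n, let t be an integer with r₁ < t < n, and let
a₁, …, a_k be nonzero elements of F_{q^n} with a_i^{q^{r₁}-1} = 1 for all
i = 1, …, k.  Let S(x) = Σ_{i=1}^k a_i x^{q^{r_i}} and
T(x) = a₁x + Σ_{i=2}^k a_i x^{q^{r_i - r₁}}.  Then S is scattered of index t
iff T is scattered of index t - r₁.  (Indices: `Fin k`, where `⟨0, hk⟩`
corresponds to the subscript 1.) -/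
theorem stmt8 (q n k t : ℕ)
    (hq : ∃ p m : ℕ, p.Prime ∧ Odd p ∧ 0 < m ∧ q = p ^ m)
    (hn : 0 < n) (hk : 0 < k)
    (r : Fin k → ℕ) (hmono : StrictMono r)
    (hr0 : 0 < r ⟨0, hk⟩) (hrn : ∀ i, r i < n)
    (htl : r ⟨0, hk⟩ < t) (htn : t < n)
    (L : Type) [Field L] [Fintype L] (hcard : Fintype.card L = q ^ n)
    (a : Fin k → L) (ha : ∀ i, a i ≠ 0)
    (hord : ∀ i : Fin k, a i ^ (q ^ r ⟨0, hk⟩ - 1) = 1) :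
    IsScattered q t (fun x : L => ∑ i, a i * x ^ q ^ r i) ↔
    IsScattered q (t - r ⟨0, hk⟩)
      (fun x : L => a ⟨0, hk⟩ * x +
        ∑ i ∈ Finset.univ.erase ⟨0, hk⟩, a i * x ^ q ^ (r i - r ⟨0, hk⟩)) :=
  stmt8_general q n k t hq hk r hmono htl L hcard a hord
end

section
/- Let q be a power of an odd prime, n a positive integer, 0 < t < r₁ < r₂ < ⋯ < r_k < n, and a₁, …, a_k nonzero elements of F_{q^n} such that a_i^{q^{t}-1} = 1 for all i = 1, …, k. Then S(x) = Σ_{i=1}^{k} a_i x^{q^{r_i}} is scattered of index t over F_{q^n} if and only if for every ρ ∈ F_{q^n}^* \ F_q, the map S_ρ^t : F_{q^n} → F_{q^n} given by S_ρ^t(x) = Σ_{i=1}^{k} a_i (ρ^{q^{r_i - t}} - ρ) x^{q^{r_i - t}} is a bijection of F_{q^n} (i.e., a permutation polynomial of F_{q^n}). -/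
/-! For `q = p ^ m`, `aᵢ ^ q ^ t = aᵢ` and `t ≤ rᵢ`, applying the `q ^ t`-Frobenius to `S_ρ^t(z)`
gives `S_ρ^t(z) ^ q ^ t = S(ρz) - ρ ^ q ^ t S(z)`. So `S_ρ^t` has a nonzero root `z` exactly
when the scattered condition fails for the pair `(ρz, z)`. As `S_ρ^t` is additive, having no
nonzero root means being injective, which on a finite field means being bijective. -/

section Linearized

variable {L : Type} [Field L] (p : ℕ) [ExpChar L p] (m : ℕ) {ι : Type*} [Fintype ι]

theorem iterateFrobenius_mul_eq_pow_pow (s : ℕ) (x : L) :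
    iterateFrobenius L p (m * s) x = x ^ (p ^ m) ^ s := by
  rw [iterateFrobenius_def, pow_mul]

/-- The map `S_ρ^t` attached to `S(x) = ∑ aᵢ x^{q^{rᵢ}}`, with `q = p ^ m`. -/
def twistedLinearized (t : ℕ) (a : ι → L) (r : ι → ℕ) (ρ : L) : L →+ L :=
  AddMonoidHom.mk' (fun x => ∑ i, a i * (ρ ^ (p ^ m) ^ (r i - t) - ρ) * x ^ (p ^ m) ^ (r i - t))
    fun x y => by
      simp only [← iterateFrobenius_mul_eq_pow_pow, map_add, mul_add, Finset.sum_add_distrib]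

variable {p m} {t : ℕ} {a : ι → L} {r : ι → ℕ}

theorem twistedLinearized_pow (hat : ∀ i, a i ^ (p ^ m) ^ t = a i) (htr : ∀ i, t ≤ r i)
    (ρ z : L) :
    twistedLinearized p m t a r ρ z ^ (p ^ m) ^ t =
      ∑ i, a i * (ρ * z) ^ (p ^ m) ^ r i - ρ ^ (p ^ m) ^ t * ∑ i, a i * z ^ (p ^ m) ^ r i := by
  rw [Finset.mul_sum, ← Finset.sum_sub_distrib, twistedLinearized, AddMonoidHom.mk'_apply,
    ← iterateFrobenius_mul_eq_pow_pow, map_sum]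
  refine Finset.sum_congr rfl fun i _ => ?_
  have hr : (p ^ m) ^ r i = (p ^ m) ^ t * (p ^ m) ^ (r i - t) := by
    rw [← pow_add, Nat.add_sub_cancel' (htr i)]
  simp only [map_mul, map_sub, map_pow, iterateFrobenius_mul_eq_pow_pow, hat]
  rw [hr, pow_mul, pow_mul, mul_pow]
  ring

theorem isScattered_iff_forall_injective_twistedLinearized
    (hat : ∀ i, a i ^ (p ^ m) ^ t = a i) (htr : ∀ i, t ≤ r i) :
    IsScattered (p ^ m) t (fun x : L => ∑ i, a i * x ^ (p ^ m) ^ r i) ↔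
      ∀ ρ : L, ρ ≠ 0 → ρ ^ p ^ m ≠ ρ → Function.Injective (twistedLinearized p m t a r ρ) := by
  have hq : (p ^ m) ^ t ≠ 0 := pow_ne_zero _ (pow_ne_zero _ (expChar_pos L p).ne')
  constructor
  · intro hS ρ hρ hρq
    refine (injective_iff_map_eq_zero _).2 fun w hw => by_contra fun hw0 => hρq ?_
    have h := twistedLinearized_pow hat htr ρ w
    rw [hw, zero_pow hq, eq_comm, sub_eq_zero] at h
    have := hS (ρ * w) w (mul_ne_zero hρ hw0) hw0 (by dsimp only; rw [h, mul_pow]; ring)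
    rwa [mul_div_cancel_right₀ _ hw0] at this
  · intro hinj y z hy hz hyz
    by_contra hρq
    have hw : twistedLinearized p m t a r (y / z) z = 0 := by
      refine (pow_eq_zero_iff hq).1 ?_
      rw [twistedLinearized_pow hat htr, div_mul_cancel₀ y hz, sub_eq_zero]
      have hzq : z ^ (p ^ m) ^ t ≠ 0 := pow_ne_zero _ hz
      refine mul_right_cancel₀ hzq ?_
      rw [div_pow, div_mul_eq_mul_div, div_mul_cancel₀ _ hzq]
      exact hyz.trans (mul_comm _ _)
    exact hz ((injective_iff_map_eq_zero _).1 (hinj _ (div_ne_zero hy hz) hρq) z hw)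

end Linearized

theorem stmt9_general (q n k t : ℕ)
    (hq : ∃ p m : ℕ, p.Prime ∧ Odd p ∧ 0 < m ∧ q = p ^ m)
    (hk : 0 < k)
    (r : Fin k → ℕ) (hmono : StrictMono r)
    (htr : t < r ⟨0, hk⟩)
    (L : Type) [Field L] [Fintype L] (hcard : Fintype.card L = q ^ n)
    (a : Fin k → L)
    (hord : ∀ i : Fin k, a i ^ (q ^ t - 1) = 1) :
    IsScattered q t (fun x : L => ∑ i, a i * x ^ q ^ r i) ↔
    ∀ ρ : L, ρ ≠ 0 → ρ ^ q ≠ ρ →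
      Function.Bijective
        (fun x : L => ∑ i, a i * (ρ ^ q ^ (r i - t) - ρ) * x ^ q ^ (r i - t)) := by
  obtain ⟨p, m, hp, -, -, rfl⟩ := hq
  have := Fact.mk hp
  have : CharP L p := charP_of_card_eq_prime_pow (hcard.trans (pow_mul p m n).symm)
  have hat (i : Fin k) : a i ^ (p ^ m) ^ t = a i := by
    rw [← pow_sub_one_mul (pow_ne_zero _ (pow_ne_zero _ hp.ne_zero)), hord, one_mul]
  have htr' (i : Fin k) : t ≤ r i :=
    htr.le.trans (hmono.monotone (show ⟨0, hk⟩ ≤ i from Nat.zero_le _))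
  rw [isScattered_iff_forall_injective_twistedLinearized hat htr']
  exact forall₃_congr fun ρ _ _ => Finite.injective_iff_bijective

/-- Let q be a power of an odd prime, n a positive integer,
0 < t < r₁ < r₂ < ⋯ < r_k < n, and a₁, …, a_k nonzero elements of F_{q^n} with
a_i^{q^t-1} = 1 for all i = 1, …, k.  Then S(x) = Σ_{i=1}^k a_i x^{q^{r_i}} is
scattered of index t over F_{q^n} iff for every ρ ∈ F_{q^n}^* \ F_q (i.e. ρ ≠ 0
not fixed by the q-power Frobenius), the map
S_ρ^t(x) = Σ_{i=1}^k a_i (ρ^{q^{r_i - t}} - ρ) x^{q^{r_i - t}} is a bijection of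
F_{q^n}.  (Indices: `Fin k`, where `⟨0, hk⟩` corresponds to the subscript 1.) -/
theorem stmt9 (q n k t : ℕ)
    (hq : ∃ p m : ℕ, p.Prime ∧ Odd p ∧ 0 < m ∧ q = p ^ m)
    (hn : 0 < n) (hk : 0 < k)
    (r : Fin k → ℕ) (hmono : StrictMono r)
    (ht : 0 < t) (htr : t < r ⟨0, hk⟩) (hrn : ∀ i, r i < n)
    (L : Type) [Field L] [Fintype L] (hcard : Fintype.card L = q ^ n)
    (a : Fin k → L) (ha : ∀ i, a i ≠ 0)
    (hord : ∀ i : Fin k, a i ^ (q ^ t - 1) = 1) :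
    IsScattered q t (fun x : L => ∑ i, a i * x ^ q ^ r i) ↔
    ∀ ρ : L, ρ ≠ 0 → ρ ^ q ≠ ρ →
      Function.Bijective
        (fun x : L => ∑ i, a i * (ρ ^ q ^ (r i - t) - ρ) * x ^ q ^ (r i - t)) :=
  stmt9_general q n k t hq hk r hmono htr L hcard a hord
end

section
/- Let q be a power of an odd prime, n a positive integer, 0 < r₁ < r₂ < n, and a₁, a₂ nonzero elements of F_{q^n} with a₂^{q^{r₁}-1} = 1. Let S(x) = a₁x^{q^{r₁}} + a₂x^{q^{r₂}}, viewed as a map on F_{q^n}. Then the following are equivalent: (1) S is scattered of index t over F_{q^n} for each t ∈ {r₁, r₂}; (2) gcd(r₂ - r₁, n) = 1. -/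
/-- If `u^(q^a) = u` then `u^(q^(a*k)) = u`. -/
lemma pow_pow_mul_fix {M : Type*} [Monoid M] {q : ℕ} {u : M} {a : ℕ}
    (h : u ^ q ^ a = u) (k : ℕ) : u ^ q ^ (a * k) = u := by
  induction k with
  | zero => simp
  | succ k ih =>
    have : q ^ (a * (k + 1)) = q ^ (a * k) * q ^ a := by ring
    rw [this, pow_mul, ih, h]

/-- If `u^(q^a) = u` and `u^(q^b) = u` then `u^(q^(gcd a b)) = u`. -/
lemma pow_pow_gcd_fix {M : Type*} [Monoid M] {q : ℕ} {u : M} :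
    ∀ a b : ℕ, u ^ q ^ a = u → u ^ q ^ b = u → u ^ q ^ (Nat.gcd a b) = u := by
  intro a
  induction a using Nat.strong_induction_on with
  | _ a ih =>
    intro b ha hb
    match a with
    | 0 => simpa using hb
    | a + 1 =>
      rw [Nat.gcd_rec]
      refine ih (b % (a + 1)) (Nat.mod_lt _ (Nat.succ_pos a)) (a + 1) ?_ ha
      have hdecomp : (a + 1) * (b / (a + 1)) + b % (a + 1) = b := Nat.div_add_mod b (a + 1)
      calc u ^ q ^ (b % (a + 1))
          = (u ^ q ^ ((a+1) * (b / (a+1)))) ^ q ^ (b % (a+1)) := by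
            rw [pow_pow_mul_fix ha]
        _ = u ^ q ^ b := by rw [← pow_mul, ← pow_add, hdecomp]
        _ = u := hb



/-- Let q be a power of an odd prime, n a positive integer,
0 < r₁ < r₂ < n, and a₁, a₂ nonzero elements of F_{q^n} with a₂^{q^{r₁}-1} = 1.
Let S(x) = a₁x^{q^{r₁}} + a₂x^{q^{r₂}}.  Then S is scattered of index t for
each t ∈ {r₁, r₂} iff gcd(r₂ - r₁, n) = 1. -/
theorem stmt10 (q n r₁ r₂ : ℕ)
    (hq : ∃ p m : ℕ, p.Prime ∧ Odd p ∧ 0 < m ∧ q = p ^ m)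
    (hn : 0 < n) (hr₁ : 0 < r₁) (hr₁₂ : r₁ < r₂) (hr₂ : r₂ < n)
    (L : Type) [Field L] [Fintype L] (hcard : Fintype.card L = q ^ n)
    (a₁ a₂ : L) (ha₁ : a₁ ≠ 0) (ha₂ : a₂ ≠ 0)
    (hord : a₂ ^ (q ^ r₁ - 1) = 1) :
    (∀ t ∈ ({r₁, r₂} : Set ℕ),
        IsScattered q t (fun x : L => a₁ * x ^ q ^ r₁ + a₂ * x ^ q ^ r₂)) ↔
    Nat.gcd (r₂ - r₁) n = 1 := by
  obtain ⟨p, m, hp, hpodd, hm, rfl⟩ := hq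
  set q := p ^ m with hqdef
  have hq2 : 2 ≤ q := by
    calc 2 ≤ p := hp.two_le
    _ = p ^ 1 := (pow_one p).symm
    _ ≤ p ^ m := Nat.pow_le_pow_right hp.pos hm
  have hq1 : 1 ≤ q := by omega
  have hqn2 : 2 ≤ q ^ n := by
    calc 2 ≤ q := hq2
    _ = q ^ 1 := (pow_one q).symm
    _ ≤ q ^ n := Nat.pow_le_pow_right (by omega) hn
  have hcop : Nat.Coprime q (q ^ n - 1) := by
    have h1 : Nat.Coprime (q ^ n) (q ^ n - 1) := by
      have h2 : q ^ n = (q ^ n - 1) + 1 := by omega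
      rw [h2]
      simp [Nat.Coprime, Nat.succ_sub_one, Nat.gcd_self_add_left]
    exact Nat.Coprime.coprime_dvd_left (dvd_pow_self q hn.ne') h1
  constructor
  · -- scattered ⇒ gcd = 1
    intro hS
    by_contra hgcd
    set d := Nat.gcd (r₂ - r₁) n with hddef
    have hdpos : 0 < d := Nat.gcd_pos_of_pos_right _ hn
    have hd2 : 2 ≤ d := by omega
    have hdr : d ∣ r₂ - r₁ := Nat.gcd_dvd_left _ _
    have hdn : d ∣ n := Nat.gcd_dvd_right _ _
    have key : ∀ e : ℕ, d ∣ e → q ^ d - 1 ∣ q ^ e - 1 := by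
      rintro e ⟨c, rfl⟩
      have := Nat.sub_dvd_pow_sub_pow (q ^ d) 1 c
      simpa [← pow_mul] using this
    haveI := Classical.decEq L
    obtain ⟨ζ, hζ⟩ := IsCyclic.exists_generator (α := Lˣ)
    have hζord : orderOf ζ = q ^ n - 1 := by
      rw [orderOf_eq_card_of_forall_mem_zpowers hζ, Nat.card_eq_fintype_card,
        Fintype.card_units, hcard]
    set k := (q ^ n - 1) / (q ^ d - 1) with hkdef
    have hk_dvd : k ∣ q ^ n - 1 := Nat.div_dvd_of_dvd (key n hdn)
    have hqd2 : 2 ≤ q ^ d := by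
      calc 2 ≤ q := hq2
      _ = q ^ 1 := (pow_one q).symm
      _ ≤ q ^ d := Nat.pow_le_pow_right (by omega) hdpos
    have hqn1 : 0 < q ^ n - 1 := by omega
    set u : Lˣ := ζ ^ k with hudef
    have huord : orderOf u = q ^ d - 1 := by
      rw [hudef, orderOf_pow, hζord, Nat.gcd_eq_right hk_dvd, hkdef,
        Nat.div_div_self (key n hdn) hqn1.ne']
    have hu2 : u ^ (q ^ (r₂ - r₁) - 1) = 1 :=
      orderOf_dvd_iff_pow_eq_one.mp (huord ▸ key _ hdr)
    have hupow : u ^ q ^ (r₂ - r₁) = u := by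
      have h3 : q ^ (r₂ - r₁) = (q ^ (r₂ - r₁) - 1) + 1 := by
        have : 1 ≤ q ^ (r₂ - r₁) := Nat.one_le_pow _ _ (by omega)
        omega
      rw [h3, pow_succ, hu2, one_mul]
    have hexp : q ^ (r₂ - r₁) * q ^ r₁ = q ^ r₂ := by
      rw [← pow_add, Nat.sub_add_cancel hr₁₂.le]
    have hukey : (u : L) ^ q ^ r₂ = (u : L) ^ q ^ r₁ := by
      have h4 : u ^ q ^ r₂ = u ^ q ^ r₁ := by
        rw [← hexp, pow_mul, hupow]
      exact_mod_cast congrArg Units.val h4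
    have hmem : r₁ ∈ ({r₁, r₂} : Set ℕ) := Set.mem_insert _ _
    have hres := hS r₁ hmem (u : L) 1 (Units.ne_zero u) one_ne_zero (by
      simp only [one_pow, mul_one, hukey]; ring)
    rw [div_one] at hres
    -- u^q = u in Lˣ, so u^(q-1) = 1
    have huq : u ^ q = u := Units.ext (by push_cast; exact hres)
    have huq1 : u ^ (q - 1) = 1 := by
      have h5 : u ^ (q - 1) * u = 1 * u := by
        rw [one_mul, ← pow_succ, Nat.sub_add_cancel hq1, huq]
      exact mul_right_cancel h5
    have hdvd : q ^ d - 1 ∣ q - 1 := huord ▸ orderOf_dvd_of_pow_eq_one huq1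
    have hle : q ^ d - 1 ≤ q - 1 := Nat.le_of_dvd (by omega) hdvd
    -- but q^d ≥ q^2 > q, contradiction
    have hq_lt : q < q ^ d := by
      calc q < q * q := by nlinarith
      _ = q ^ 2 := (sq q).symm
      _ ≤ q ^ d := Nat.pow_le_pow_right (by omega) hd2
    omega
  · -- gcd = 1 ⇒ scattered
    intro hgcd t ht y z hy hz heq
    have hu : y / z ≠ 0 := div_ne_zero hy hz
    set u : L := y / z with hudef
    simp only at heq
    have hkey : u ^ q ^ r₂ = u ^ q ^ r₁ := by
      rw [hudef, div_pow, div_pow, div_eq_div_iff (pow_ne_zero _ hz) (pow_ne_zero _ hz)]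
      simp only [Set.mem_insert_iff, Set.mem_singleton_iff] at ht
      rcases ht with h | h
      · rw [h] at heq
        have h2 : a₂ * (y ^ q ^ r₂ * z ^ q ^ r₁) = a₂ * (y ^ q ^ r₁ * z ^ q ^ r₂) := by
          linear_combination heq
        exact mul_left_cancel₀ ha₂ h2
      · rw [h] at heq
        have h2 : a₁ * (y ^ q ^ r₂ * z ^ q ^ r₁) = a₁ * (y ^ q ^ r₁ * z ^ q ^ r₂) := by
          linear_combination -heq
        exact mul_left_cancel₀ ha₁ h2
    have hexp : q ^ (r₂ - r₁) * q ^ r₁ = q ^ r₂ := by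
      rw [← pow_add, Nat.sub_add_cancel hr₁₂.le]
    have hsub : u ^ q ^ (r₂ - r₁) = u := by
      set w : L := u ^ q ^ (r₂ - r₁) / u with hwdef
      have hw0 : w ≠ 0 := div_ne_zero (pow_ne_zero _ hu) hu
      have hwpow : w ^ q ^ r₁ = 1 := by
        rw [hwdef, div_pow, ← pow_mul, hexp, hkey, div_self (pow_ne_zero _ hu)]
      have hwcard : w ^ (q ^ n - 1) = 1 := by
        rw [← hcard]; exact FiniteField.pow_card_sub_one_eq_one w hw0
      have hdvd1 : orderOf w ∣ q ^ r₁ := orderOf_dvd_of_pow_eq_one hwpow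
      have hdvd2 : orderOf w ∣ q ^ n - 1 := orderOf_dvd_of_pow_eq_one hwcard
      have hcop' : Nat.Coprime (q ^ r₁) (q ^ n - 1) := Nat.Coprime.pow_left r₁ hcop
      have hord1 : orderOf w = 1 := Nat.eq_one_of_dvd_coprimes hcop' hdvd1 hdvd2
      have hw1 : w = 1 := orderOf_eq_one_iff.mp hord1
      rw [hwdef] at hw1
      field_simp at hw1
      exact hw1
    have hL : u ^ q ^ n = u := by
      rw [← hcard]; exact FiniteField.pow_card u
    have hfinal := pow_pow_gcd_fix (r₂ - r₁) n hsub hL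
    rwa [hgcd, pow_one] at hfinal
end

section
/- Let q be a power of an odd prime, n a positive integer, r a positive integer with r < n, and a₁, a₂ nonzero elements of F_{q^n}. Then the map T : F_{q^n} → F_{q^n} given by T(x) = a₁x + a₂x^{q^r} is scattered of index r over F_{q^n} if and only if gcd(r, n) = 1. -/
/-- `q^a - 1` divides `q^b - 1` when `a ∣ b`. -/
lemma aux_pow_sub_one_dvd (q a b : ℕ) (h : a ∣ b) : q ^ a - 1 ∣ q ^ b - 1 := by
  obtain ⟨c, rfl⟩ := h
  simpa [one_pow, pow_mul] using Nat.sub_dvd_pow_sub_pow (q ^ a) 1 c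

/-- If `gcd r n = 1` then `gcd (q^r - 1) (q^n - 1)` divides `q - 1`. -/
lemma aux_gcd_dvd (q r n : ℕ) (hg : Nat.gcd r n = 1) :
    Nat.gcd (q ^ r - 1) (q ^ n - 1) ∣ q - 1 := by
  rcases Nat.lt_or_ge q 1 with hq | hq
  · interval_cases q <;> simp
  set d := Nat.gcd (q ^ r - 1) (q ^ n - 1) with hd
  have h1 : d ∣ q ^ r - 1 := Nat.gcd_dvd_left _ _
  have h2 : d ∣ q ^ n - 1 := Nat.gcd_dvd_right _ _
  have hqr : 1 ≤ q ^ r := Nat.one_le_pow _ _ hq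
  have hqn : 1 ≤ q ^ n := Nat.one_le_pow _ _ hq
  have e1 : (q : ZMod d) ^ r = 1 := by
    have := (ZMod.natCast_eq_zero_iff _ d).2 h1
    rw [Nat.cast_sub hqr] at this
    push_cast at this
    linear_combination this
  have e2 : (q : ZMod d) ^ n = 1 := by
    have := (ZMod.natCast_eq_zero_iff _ d).2 h2
    rw [Nat.cast_sub hqn] at this
    push_cast at this
    linear_combination this
  have ho : orderOf (q : ZMod d) ∣ Nat.gcd r n :=
    Nat.dvd_gcd (orderOf_dvd_of_pow_eq_one e1) (orderOf_dvd_of_pow_eq_one e2)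
  rw [hg, Nat.dvd_one, orderOf_eq_one_iff] at ho
  have : ((q - 1 : ℕ) : ZMod d) = 0 := by
    rw [Nat.cast_sub hq, ho]
    ring
  exact (ZMod.natCast_eq_zero_iff _ d).1 this

/-- From `u^k = u` with `u ≠ 0` and `1 ≤ k`, deduce `u^(k-1) = 1`. -/
lemma aux_pow_pred {L : Type} [Field L] {u : L} (hu : u ≠ 0) {k : ℕ} (hk : 1 ≤ k)
    (h : u ^ k = u) : u ^ (k - 1) = 1 := by
  have : u ^ (k - 1) * u = 1 * u := by
    rw [← pow_succ, Nat.sub_add_cancel hk, h, one_mul]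
  exact mul_right_cancel₀ hu this

lemma aux_pow_self {L : Type} [Field L] {u : L} {k : ℕ} (hk : 1 ≤ k)
    (h : u ^ (k - 1) = 1) : u ^ k = u := by
  calc u ^ k = u ^ (k - 1) * u := by rw [← pow_succ, Nat.sub_add_cancel hk]
  _ = u := by rw [h, one_mul]

/-- Let q be a power of an odd prime, n a positive integer,
r a positive integer with r < n, and a₁, a₂ nonzero elements of F_{q^n}.
Then T(x) = a₁x + a₂x^{q^r} is scattered of index r over F_{q^n} iff
gcd(r, n) = 1. -/
theorem stmt11 (q n r : ℕ)
    (hq : ∃ p m : ℕ, p.Prime ∧ Odd p ∧ 0 < m ∧ q = p ^ m)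
    (hn : 0 < n) (hr : 0 < r) (hrn : r < n)
    (L : Type) [Field L] [Fintype L] (hcard : Fintype.card L = q ^ n)
    (a₁ a₂ : L) (ha₁ : a₁ ≠ 0) (ha₂ : a₂ ≠ 0) :
    IsScattered q r (fun x : L => a₁ * x + a₂ * x ^ q ^ r) ↔ Nat.gcd r n = 1 := by
  obtain ⟨p, m, hp, hpodd, hm, rfl⟩ := hq
  set q := p ^ m with hqdef
  have hq2 : 2 ≤ q := by
    calc 2 ≤ p := hp.two_le
    _ = p ^ 1 := (pow_one p).symm
    _ ≤ p ^ m := Nat.pow_le_pow_right hp.pos hm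
  have hq1 : 1 ≤ q := le_trans (by norm_num) hq2
  have hQ1 : 1 ≤ q ^ r := Nat.one_le_pow _ _ hq1
  have hN1 : 1 ≤ q ^ n := Nat.one_le_pow _ _ hq1
  constructor
  · -- scattered → gcd = 1
    intro hs
    by_contra hgcd
    set g := Nat.gcd r n with hgdef
    have hg1 : 1 ≤ g := Nat.gcd_pos_of_pos_left _ hr
    have hg2 : 2 ≤ g := by omega
    -- find a unit of order q^g - 1
    obtain ⟨ζ, hζ⟩ := IsCyclic.exists_ofOrder_eq_natCard (α := Lˣ)
    have hNcard : Nat.card Lˣ = q ^ n - 1 := by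
      rw [Nat.card_units, Nat.card_eq_fintype_card, hcard]
    rw [hNcard] at hζ
    have hdvdN : q ^ g - 1 ∣ q ^ n - 1 := aux_pow_sub_one_dvd q g n (Nat.gcd_dvd_right _ _)
    have hdvdR : q ^ g - 1 ∣ q ^ r - 1 := aux_pow_sub_one_dvd q g r (Nat.gcd_dvd_left _ _)
    have hg1' : 1 ≤ q ^ g := Nat.one_le_pow _ _ hq1
    have hdpos : 0 < q ^ g - 1 := by
      have : 2 ≤ q ^ g := le_trans hq2 (Nat.le_self_pow (by omega) q)
      omega
    set u : Lˣ := ζ ^ ((q ^ n - 1) / (q ^ g - 1)) with hu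
    have hNpos : 0 < q ^ n - 1 := by
      have : 2 ≤ q ^ n := le_trans hq2 (Nat.le_self_pow (by omega) q)
      omega
    have hou : orderOf u = q ^ g - 1 := by
      rw [hu, orderOf_pow, hζ, Nat.gcd_eq_right (Nat.div_dvd_of_dvd hdvdN),
        Nat.div_div_self hdvdN (by omega)]
    -- u^(q^r) = u in L
    have hur : (u : L) ^ q ^ r = (u : L) := by
      apply aux_pow_self hQ1
      have : u ^ (q ^ r - 1) = 1 := orderOf_dvd_iff_pow_eq_one.mp (hou ▸ hdvdR)
      simpa using congrArg Units.val this
    have hune : (u : L) ≠ 0 := Units.ne_zero u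
    -- apply scattered with y = u, z = 1
    have heq : (fun x : L => a₁ * x + a₂ * x ^ q ^ r) (u : L) * (1 : L) ^ q ^ r =
        (fun x : L => a₁ * x + a₂ * x ^ q ^ r) 1 * (u : L) ^ q ^ r := by
      simp only [one_pow, mul_one, hur]
      ring
    have := hs (u : L) 1 hune one_ne_zero heq
    rw [div_one] at this
    -- so u^(q-1) = 1, hence orderOf u ∣ q - 1, contradiction with orderOf u = q^g - 1 > q - 1
    have hq1u : (u : L) ^ (q - 1) = 1 := aux_pow_pred hune hq1 this
    have hq1u' : u ^ (q - 1) = 1 := by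
      ext
      push_cast
      exact hq1u
    have hdvd : q ^ g - 1 ∣ q - 1 := hou ▸ orderOf_dvd_of_pow_eq_one hq1u'
    have hlt : q - 1 < q ^ g - 1 := by
      have : q < q ^ g := by
        calc q = q ^ 1 := (pow_one q).symm
        _ < q ^ g := Nat.pow_lt_pow_right (by omega) hg2
      omega
    have := Nat.le_of_dvd (by omega) hdvd
    omega
  · -- gcd = 1 → scattered
    intro hg
    intro y z hy hz heq
    simp only at heq
    set Q := q ^ r with hQ
    have hzQ : z ^ Q ≠ 0 := pow_ne_zero _ hz
    -- reduce to y * z^Q = z * y^Q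
    have key : y * z ^ Q = z * y ^ Q := by
      have h' : a₁ * (y * z ^ Q) = a₁ * (z * y ^ Q) := by linear_combination heq
      exact mul_left_cancel₀ ha₁ h'
    set u : L := y / z with hu
    have hune : u ≠ 0 := div_ne_zero hy hz
    have huQ : u ^ Q = u := by
      rw [hu, div_pow, div_eq_div_iff hzQ hz]
      linear_combination -key
    have h1 : u ^ (q ^ r - 1) = 1 := aux_pow_pred hune hQ1 huQ
    have h2 : u ^ (q ^ n - 1) = 1 := by
      rw [← hcard]
      exact FiniteField.pow_card_sub_one_eq_one u hune
    have ho : orderOf u ∣ q - 1 :=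
      dvd_trans (Nat.dvd_gcd (orderOf_dvd_of_pow_eq_one h1) (orderOf_dvd_of_pow_eq_one h2))
        (aux_gcd_dvd q r n hg)
    have : u ^ (q - 1) = 1 := orderOf_dvd_iff_pow_eq_one.mp ho
    exact aux_pow_self hq1 this
end

section
/- Let q be an odd prime power with q ≡ 1 (mod 4), and let δ ∈ F_{q^8}^* with δ ≠ 1, δ ≠ -1, and δ² = -1. Then the map S : F_{q^8} → F_{q^8} given by S(x) = x^q + δx^{q^5} is not scattered of index 1 and not scattered of index 5 over F_{q^8}. -/
theorem aux (q : ℕ) (hq2 : 2 ≤ q) (L : Type) [Field L] [Fintype L] (hcard : Fintype.card L = q ^ 8) :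
    ∃ y : L, y ≠ 0 ∧ y ^ q ^ 4 = y ∧ y ^ q ≠ y := by
  have hcu : Nat.card Lˣ = q ^ 8 - 1 := by
    rw [Nat.card_units, Nat.card_eq_fintype_card, hcard]
  obtain ⟨g, hg⟩ := IsCyclic.exists_ofOrder_eq_natCard (α := Lˣ)
  rw [hcu] at hg
  set u := g ^ (q ^ 4 + 1) with hu
  have hq4 : 1 ≤ q ^ 4 := Nat.one_le_pow _ _ (by omega)
  have hq8 : 1 ≤ q ^ 8 := Nat.one_le_pow _ _ (by omega)
  have hfac : q ^ 8 - 1 = (q ^ 4 + 1) * (q ^ 4 - 1) := by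
    zify [hq4, hq8]; ring
  have hou : orderOf u = q ^ 4 - 1 := by
    rw [hu, orderOf_pow, hg, hfac, Nat.gcd_comm,
      Nat.gcd_eq_left ⟨q ^ 4 - 1, rfl⟩, Nat.mul_div_cancel_left _ (by omega)]
  refine ⟨(u : L), u.ne_zero, ?_, ?_⟩
  · have h1 : u ^ (q ^ 4 - 1) = 1 := by rw [← hou]; exact pow_orderOf_eq_one u
    have h2 : u ^ (q ^ 4) = u := by
      have he : q ^ 4 = (q ^ 4 - 1) + 1 := by omega
      rw [he, pow_add, h1, one_mul, pow_one]
    calc (u : L) ^ q ^ 4 = ((u ^ q ^ 4 : Lˣ) : L) := by push_cast; ring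
      _ = u := by rw [h2]
  · intro h
    have hq1 : ((u : L)) ^ (q - 1) * (u : L) = 1 * (u : L) := by
      rw [← pow_succ, one_mul]
      have he : q - 1 + 1 = q := by omega
      rw [he, h]
    have h2 : (u : L) ^ (q - 1) = 1 := mul_right_cancel₀ u.ne_zero hq1
    have h3 : u ^ (q - 1) = 1 := by ext; push_cast; exact h2
    have hd := orderOf_dvd_of_pow_eq_one h3
    rw [hou] at hd
    have hle := Nat.le_of_dvd (by omega) hd
    zify [hq4, (by omega : 1 ≤ q)] at hle
    have hq2' : (2:ℤ) ≤ (q:ℤ) := by exact_mod_cast hq2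
    nlinarith [hq2', hle, sq_nonneg ((q:ℤ)^2 - q), sq_nonneg ((q:ℤ) - 1), sq_nonneg ((q:ℤ)+1)]

/-- Let q be an odd prime power with q ≡ 1 (mod 4) and
δ ∈ F_{q^8}^* with δ ≠ 1, δ ≠ -1, δ² = -1.  Then S(x) = x^q + δx^{q^5} is not
scattered of index 1 and not scattered of index 5 over F_{q^8}. -/
theorem stmt13 (q : ℕ)
    (hq : ∃ p m : ℕ, p.Prime ∧ Odd p ∧ 0 < m ∧ q = p ^ m)
    (hq4 : q % 4 = 1)
    (L : Type) [Field L] [Fintype L] (hcard : Fintype.card L = q ^ 8)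
    (δ : L) (hδ0 : δ ≠ 0) (hδ1 : δ ≠ 1) (hδm1 : δ ≠ -1) (hδsq : δ ^ 2 = -1) :
    ¬ IsScattered q 1 (fun x : L => x ^ q + δ * x ^ q ^ 5) ∧
    ¬ IsScattered q 5 (fun x : L => x ^ q + δ * x ^ q ^ 5) := by
  obtain ⟨p, m, hp, hpo, hm, hqpm⟩ := hq
  have hq2 : 2 ≤ q := by
    subst hqpm
    calc 2 ≤ p := hp.two_le
      _ = p ^ 1 := (pow_one p).symm
      _ ≤ p ^ m := Nat.pow_le_pow_right hp.pos hm
  obtain ⟨y, hy0, hy4, hyq⟩ := aux q hq2 L hcard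
  have hy5 : y ^ q ^ 5 = y ^ q := by
    have : q ^ 5 = q ^ 4 * q := by ring
    rw [this, pow_mul, hy4]
  have hyd : (y / 1) ^ q ≠ y / 1 := by rwa [div_one]
  constructor
  · intro hS
    apply hyd
    apply hS y 1 hy0 one_ne_zero
    simp only [one_pow, mul_one, hy5, pow_one]
    ring
  · intro hS
    apply hyd
    apply hS y 1 hy0 one_ne_zero
    simp only [one_pow, mul_one, hy5, pow_one]
    ring
end

section
/- Let δ ∈ F_{5^8}^* with δ ≠ 1, δ ≠ -1, and δ⁴ = 1 (i.e., the multiplicative order of δ divides 4). Then the map S : F_{5^8} → F_{5^8} given by S(x) = x^5 + δx^{5^5} is scattered of index 0 over F_{5^8}. -/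
namespace RingHom

variable {K : Type*} [Field K] (σ : K →+* K)

lemma pow_apply_pow_apply (m n : ℕ) (x : K) : (σ ^ m) ((σ ^ n) x) = (σ ^ (m + n)) x := by
  rw [pow_add]; rfl

lemma apply_pow_apply (n : ℕ) (x : K) : σ ((σ ^ n) x) = (σ ^ (n + 1)) x := by
  rw [pow_succ']; rfl

lemma pow_apply_apply (n : ℕ) (x : K) : (σ ^ n) (σ x) = (σ ^ (n + 1)) x := by
  rw [pow_succ]; rfl

lemma apply_apply (x : K) : σ (σ x) = (σ ^ 2) x := by
  rw [pow_two]; rfl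

theorem eq_zero_of_sq_map_eq_sq_of_map_map_eq_neg (h2 : (2 : K) ≠ 0) {Y : K}
    (hsq : (σ Y) ^ 2 = Y ^ 2) (hneg : σ (σ Y) = -Y) : Y = 0 := by
  have hfix : σ (σ Y) = Y := by
    rcases sq_eq_sq_iff_eq_or_eq_neg.mp hsq with h | h <;> simp [h]
  have h2Y : 2 * Y = 0 := by linear_combination hneg - hfix
  exact (mul_eq_zero.mp h2Y).resolve_left h2

theorem sq_map_eq_sq_of_alternating_sum_sq_eq_zero (h2 : (2 : K) ≠ 0) {R : K}
    (hR : (σ ^ 4) R = R) (htr : R + σ R + (σ ^ 2) R + (σ ^ 3) R = 0)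
    (halt : R ^ 2 - (σ R) ^ 2 + ((σ ^ 2) R) ^ 2 - ((σ ^ 3) R) ^ 2 = 0) :
    (σ R) ^ 2 = R ^ 2 := by
  have hC : R - (σ ^ 2) R = 0 := by
    refine σ.eq_zero_of_sq_map_eq_sq_of_map_map_eq_neg h2 ?_ ?_
    · simp only [map_sub, apply_pow_apply]
      linear_combination (-2) * halt + (R - σ R + (σ ^ 2) R - (σ ^ 3) R) * htr
    · simp only [map_sub, apply_apply, apply_pow_apply, hR]
      ring
  have hσC : σ R - (σ ^ 3) R = 0 := by
    simpa only [map_sub, apply_pow_apply, map_zero] using congrArg σ hC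
  have hneg : σ R = -R := by
    have : 2 * (R + σ R) = 0 := by linear_combination htr + hC + hσC
    linear_combination (mul_eq_zero.mp this).resolve_left h2
  rw [hneg, neg_sq]

theorem eq_zero_of_sq_add_sq_map_eq_sq (h2 : (2 : K) ≠ 0) {X R : K}
    (hX : (σ ^ 4) X = -X) (hR : (σ ^ 4) R = R)
    (htr : R + σ R + (σ ^ 2) R + (σ ^ 3) R = 0) (h : X ^ 2 + (σ X) ^ 2 = R ^ 2) : X = 0 := by
  have hconj (k : ℕ) : ((σ ^ k) X) ^ 2 + ((σ ^ (k + 1)) X) ^ 2 = ((σ ^ k) R) ^ 2 := by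
    simpa only [map_add, map_pow, pow_apply_apply] using congrArg (σ ^ k) h
  have h₁ := hconj 1
  have h₂ := hconj 2
  have h₃ := hconj 3
  simp only [pow_one, Nat.reduceAdd, hX, neg_sq] at h₁ h₂ h₃
  have hR1 : (σ R) ^ 2 = R ^ 2 :=
    σ.sq_map_eq_sq_of_alternating_sum_sq_eq_zero h2 hR htr
      (by linear_combination h₁ - h - h₂ + h₃)
  refine (σ ^ 2).eq_zero_of_sq_map_eq_sq_of_map_map_eq_neg h2 ?_ ?_
  · linear_combination h₁ - h + hR1
  · rw [pow_apply_pow_apply, hX]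

variable {σ}

lemma pow_nine_eq_of_pow_eight_eq_one (hσ : σ ^ 8 = 1) : σ ^ 9 = σ := by
  rw [pow_succ, hσ, one_mul]

theorem mul_sub_eq_sq_mul_of_map_add_mul_eq (hσ : σ ^ 8 = 1) {δ u z : K}
    (hδ : (σ ^ 4) δ = δ) (hz : z ≠ 0)
    (h : (σ (u * z) + δ * (σ ^ 5) (u * z)) * z = (σ z + δ * (σ ^ 5) z) * (u * z)) :
    (σ u - u) * ((σ ^ 5) u - (σ ^ 4) u) = δ ^ 2 * ((u - (σ ^ 5) u) * ((σ ^ 4) u - σ u)) := by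
  have h0 : (σ u - u) * σ z = δ * ((u - (σ ^ 5) u) * (σ ^ 5) z) := by
    refine mul_right_cancel₀ hz ?_
    simp only [map_mul] at h
    linear_combination h
  have h4 : ((σ ^ 5) u - (σ ^ 4) u) * (σ ^ 5) z = δ * (((σ ^ 4) u - σ u) * σ z) := by
    have := congrArg (fun x ↦ (σ ^ 4) x) h0
    simpa only [map_mul, map_sub, hδ, pow_apply_apply, pow_apply_pow_apply, Nat.reduceAdd,
      pow_nine_eq_of_pow_eight_eq_one hσ] using this
  have hz' : σ z * (σ ^ 5) z ≠ 0 :=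
    mul_ne_zero ((map_ne_zero σ).2 hz) ((map_ne_zero (σ ^ 5)).2 hz)
  refine mul_right_cancel₀ hz' ?_
  linear_combination ((σ ^ 5) u - (σ ^ 4) u) * (σ ^ 5) z * h0
    + δ * ((u - (σ ^ 5) u) * (σ ^ 5) z) * h4

theorem map_eq_self_of_mul_sub_eq_neg_mul (h2 : (2 : K) ≠ 0) (hσ : σ ^ 8 = 1) {u : K}
    (h : (σ u - u) * ((σ ^ 5) u - (σ ^ 4) u) = -((u - (σ ^ 5) u) * ((σ ^ 4) u - σ u))) :
    σ u = u := by
  have h8 (x : K) : (σ ^ 8) x = x := by rw [hσ]; rfl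
  set X := u - (σ ^ 4) u with hX
  set R := (u + (σ ^ 4) u) - σ (u + (σ ^ 4) u) with hR
  have hX4 : (σ ^ 4) X = -X := by
    simp only [hX, map_sub, pow_apply_pow_apply, Nat.reduceAdd, h8]
    ring
  have hR4 : (σ ^ 4) R = R := by
    simp only [hR, map_sub, map_add, apply_pow_apply, pow_apply_pow_apply, pow_apply_apply,
      Nat.reduceAdd, h8, pow_nine_eq_of_pow_eight_eq_one hσ]
    ring
  have htr : R + σ R + (σ ^ 2) R + (σ ^ 3) R = 0 := by
    simp only [hR, map_sub, map_add, apply_apply, apply_pow_apply, pow_apply_pow_apply,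
      pow_apply_apply, Nat.reduceAdd, h8]
    ring
  have hsq : X ^ 2 + (σ X) ^ 2 = R ^ 2 := by
    simp only [hX, hR, map_sub, map_add, apply_pow_apply, Nat.reduceAdd]
    linear_combination (-2) * h
  have hX0 : X = 0 := σ.eq_zero_of_sq_add_sq_map_eq_sq h2 hX4 hR4 htr hsq
  have hR0 : R = 0 := by simpa [hX0] using hsq.symm
  have hu4 : (σ ^ 4) u = u := by linear_combination -hX0
  rw [hR, hu4, map_add] at hR0
  have : 2 * (u - σ u) = 0 := by linear_combination hR0
  linear_combination -(mul_eq_zero.mp this).resolve_left h2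

theorem map_div_eq_div_of_map_add_mul_eq (h2 : (2 : K) ≠ 0) (hσ : σ ^ 8 = 1) {δ y z : K}
    (hδ4 : (σ ^ 4) δ = δ) (hδ : δ ^ 2 = -1) (hz : z ≠ 0)
    (h : (σ y + δ * (σ ^ 5) y) * z = (σ z + δ * (σ ^ 5) z) * y) : σ (y / z) = y / z := by
  refine map_eq_self_of_mul_sub_eq_neg_mul h2 hσ ?_
  rw [← neg_one_mul, ← hδ]
  refine mul_sub_eq_sq_mul_of_map_add_mul_eq hσ hδ4 hz ?_
  rwa [div_mul_cancel₀ y hz]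

end RingHom

theorem sq_eq_neg_one_of_pow_four_eq_one {R : Type*} [CommRing R] [IsDomain R] {δ : R}
    (h1 : δ ≠ 1) (hm1 : δ ≠ -1) (h4 : δ ^ 4 = 1) : δ ^ 2 = -1 := by
  have h : (δ - 1) * (δ + 1) * (δ ^ 2 + 1) = 0 := by linear_combination h4
  simpa [sub_eq_zero, add_eq_zero_iff_eq_neg, h1, hm1] using h

theorem stmt14_general (L : Type) [Field L] [Fintype L] (hcard : Fintype.card L = 5 ^ 8)
    (δ : L) (hδ1 : δ ≠ 1) (hδm1 : δ ≠ -1) (hδord : δ ^ 4 = 1) :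
    IsScattered 5 0 (fun x : L => x ^ 5 + δ * x ^ 5 ^ 5) := by
  have : Fact (Nat.Prime 5) := ⟨by norm_num⟩
  have : CharP L 5 := charP_of_card_eq_prime_pow hcard
  have hfrob (n : ℕ) (x : L) : (frobenius L 5 ^ n) x = x ^ 5 ^ n := by
    rw [← iterateFrobenius_eq_pow, iterateFrobenius_def]
  have h2 : (2 : L) ≠ 0 := fun h ↦ by
    have := (CharP.cast_eq_zero_iff L 5 2).1 (by exact_mod_cast h)
    norm_num at this
  have hδ4 : (frobenius L 5 ^ 4) δ = δ := by
    rw [hfrob, show 5 ^ 4 = 4 * 156 + 1 by norm_num, pow_succ, pow_mul, hδord, one_pow, one_mul]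
  intro y z _ hz h
  simpa only [frobenius_def] using
    (frobenius L 5).map_div_eq_div_of_map_add_mul_eq h2 (FiniteField.frobenius_pow hcard) hδ4
      (sq_eq_neg_one_of_pow_four_eq_one hδ1 hδm1 hδord) hz
      (by simpa only [hfrob, frobenius_def, pow_zero, pow_one] using h)

/-- Let δ ∈ F_{5^8}^* with δ ≠ 1, δ ≠ -1, and δ⁴ = 1.  Then
S(x) = x^5 + δx^{5^5} is scattered of index 0 over F_{5^8}. -/
theorem stmt14 (L : Type) [Field L] [Fintype L] (hcard : Fintype.card L = 5 ^ 8)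
    (δ : L) (hδ0 : δ ≠ 0) (hδ1 : δ ≠ 1) (hδm1 : δ ≠ -1) (hδord : δ ^ 4 = 1) :
    IsScattered 5 0 (fun x : L => x ^ 5 + δ * x ^ 5 ^ 5) :=
  stmt14_general L hcard δ hδ1 hδm1 hδord
end

section
/- Let q be a power of an odd prime, let n > 3 be odd with gcd(n, q - 1) = 1, let δ ∈ F_{q^n}^* with δ ≠ 1 and δ^{q-1} = 1, and let r be a positive integer with r < n and gcd(r, n) = 1. Then the polynomial S(x) = x^q + δx^{q^{2r+1}} is exceptional scattered of index r + 1: there exist infinitely many positive integers m such that the map x ↦ x^q + δx^{q^{2r+1}} on F_{q^{mn}} is scattered of index r + 1, i.e., for all nonzero y, z ∈ F_{q^{mn}}, S(y)·z^{q^{r+1}} = S(z)·y^{q^{r+1}} implies y/z ∈ F_q. -/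
/-!
Put `w := y^q z^{q^{r+1}} - z^q y^{q^{r+1}}`. Raising `w` to the power `q^r` shows that the
scattered equation says exactly `w = δ w^{q^r}`, and since `δ` is fixed by `x ↦ x^q`,
iterating gives `w = δ^j w^{q^{rj}}`. In `F_{q^N}` with `N = mn` the choice `j = N` gives
`w = δ^N w`; as `δ^{q-1} = 1` and `gcd(N, q-1) = 1`, `δ^N = 1` would force `δ = 1`, so `w = 0`.
Then `u = y/z` satisfies `u^{q^r} = u` and `u^{q^N} = u`, hence `u^q = u` as `gcd(r, N) = 1`.
Taking `m = n^k` makes `N = n^{k+1}` coprime to both `r` and `q - 1`.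
-/

/-- The Moore determinant of `y^q, z^q` with respect to `x ↦ x^{q^r}`. -/
def mooreDet {M : Type*} [CommRing M] (q r : ℕ) (y z : M) : M :=
  y ^ q * z ^ q ^ (r + 1) - z ^ q * y ^ q ^ (r + 1)

section CommMonoid

variable {M : Type*} [CommMonoid M] {q : ℕ}

theorem pow_pow_eq_self_of_pow_eq_self_s16 {d : M} (hd : d ^ q = d) (j : ℕ) : d ^ q ^ j = d := by
  simpa only [pow_iterate] using Function.iterate_fixed (f := (· ^ q)) hd j

theorem eq_pow_mul_pow_pow_of_eq_mul_pow_pow {d w : M} {r : ℕ} (hd : d ^ q = d)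
    (hw : w = d * w ^ q ^ r) (j : ℕ) : w = d ^ j * w ^ q ^ (r * j) := by
  induction j with
  | zero => simp
  | succ j ih =>
    calc w = d ^ j * (d * w ^ q ^ r) ^ q ^ (r * j) := by rwa [← hw]
      _ = d ^ (j + 1) * w ^ q ^ (r * (j + 1)) := by
        rw [mul_pow, pow_pow_eq_self_of_pow_eq_self_s16 hd, ← pow_mul, ← pow_add, ← mul_assoc,
          ← pow_succ, mul_add_one, add_comm (r * j)]

theorem pow_eq_self_of_coprime {u : M} {r N : ℕ} (hr : u ^ q ^ r = u) (hN : u ^ q ^ N = u)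
    (hrN : r.Coprime N) : u ^ q = u := by
  have hper : ∀ k, u ^ q ^ k = u ↔ Function.IsPeriodicPt (· ^ q) k u := fun k => by
    rw [Function.IsPeriodicPt, Function.IsFixedPt, pow_iterate]
  have h := ((hper r).mp hr).gcd ((hper N).mp hN)
  rwa [hrN.gcd_eq_one, ← hper, pow_one] at h

end CommMonoid

section Field

variable {M : Type*} [Field M] {p e q : ℕ} [ExpChar M p]

theorem mooreDet_pow_pow (hq : q = p ^ e) (r : ℕ) (y z : M) :
    mooreDet q r y z ^ q ^ r =
      y ^ q ^ (r + 1) * z ^ q ^ (2 * r + 1) - z ^ q ^ (r + 1) * y ^ q ^ (2 * r + 1) := by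
  have hfrob : q ^ r = p ^ (e * r) := by rw [hq, pow_mul]
  rw [mooreDet, hfrob, sub_pow_expChar_pow, ← hfrob]
  simp only [mul_pow, ← pow_mul, ← pow_succ', ← pow_add]
  rw [show r + 1 + r = 2 * r + 1 by ring]

theorem mooreDet_eq_mul_pow_pow (hq : q = p ^ e) {r : ℕ} {d y z : M}
    (H : (y ^ q + d * y ^ q ^ (2 * r + 1)) * z ^ q ^ (r + 1)
      = (z ^ q + d * z ^ q ^ (2 * r + 1)) * y ^ q ^ (r + 1)) :
    mooreDet q r y z = d * mooreDet q r y z ^ q ^ r := by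
  rw [mooreDet_pow_pow hq, mooreDet]
  linear_combination H

theorem div_pow_pow_eq_self_of_mooreDet_eq_zero (hq : q = p ^ e) {r : ℕ} {y z : M}
    (hz : z ≠ 0) (h : mooreDet q r y z = 0) : (y / z) ^ q ^ r = y / z := by
  have hq' : (y * z ^ q ^ r) ^ q = (z * y ^ q ^ r) ^ q := by
    simp only [mul_pow, ← pow_mul]
    exact sub_eq_zero.mp h
  have := iterateFrobenius_inj M p e (by simpa only [iterateFrobenius_def, ← hq] using hq')
  rw [div_pow, div_eq_div_iff (pow_ne_zero _ hz) hz]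
  linear_combination -this

variable [Fintype M] {N : ℕ}

theorem eq_zero_of_eq_mul_pow_pow (hcard : Fintype.card M = q ^ N) {d w : M} {r : ℕ}
    (hd : d ^ q = d) (hdN : d ^ N ≠ 1) (hw : w = d * w ^ q ^ r) : w = 0 := by
  have hperiod : w ^ q ^ (r * N) = w := by
    rw [mul_comm, pow_mul, ← hcard, FiniteField.pow_card_pow]
  have h := eq_pow_mul_pow_pow_of_eq_mul_pow_pow hd hw N
  rw [hperiod] at h
  by_contra hw0
  exact hdN (mul_right_cancel₀ hw0 (by rw [one_mul, ← h]))

theorem div_pow_eq_self_of_scattered_eq (hq : q = p ^ e) (hcard : Fintype.card M = q ^ N)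
    {r : ℕ} (hrN : r.Coprime N) (hNq : N.Coprime (q - 1)) {d y z : M} (hd1 : d ≠ 1)
    (hdq : d ^ (q - 1) = 1) (hz : z ≠ 0)
    (H : (y ^ q + d * y ^ q ^ (2 * r + 1)) * z ^ q ^ (r + 1)
      = (z ^ q + d * z ^ q ^ (2 * r + 1)) * y ^ q ^ (r + 1)) :
    (y / z) ^ q = y / z := by
  have hd : d ^ q = d := by
    rw [← Nat.sub_add_cancel (hq ▸ expChar_pow_pos M p e : 1 ≤ q), pow_succ,
      hdq, one_mul]
  have hdN : d ^ N ≠ 1 := fun hdN => hd1 <| by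
    simpa [hNq.gcd_eq_one] using pow_gcd_eq_one.mpr ⟨hdN, hdq⟩
  have hmoore := eq_zero_of_eq_mul_pow_pow hcard hd hdN (mooreDet_eq_mul_pow_pow hq H)
  exact pow_eq_self_of_coprime (div_pow_pow_eq_self_of_mooreDet_eq_zero hq hz hmoore)
    (by rw [← hcard]; exact FiniteField.pow_card _) hrN

end Field

theorem stmt16_general (q n r : ℕ)
    (hq : ∃ p m : ℕ, p.Prime ∧ Odd p ∧ 0 < m ∧ q = p ^ m)
    (hn : 3 < n) (hgcdqn : Nat.gcd n (q - 1) = 1)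
    (hgcdrn : Nat.gcd r n = 1)
    (L : Type) [Field L]
    (δ : L) (hδ1 : δ ≠ 1) (hδord : δ ^ (q - 1) = 1) :
    {m : ℕ | 0 < m ∧
      ∀ (M : Type) (_ : Field M) (_ : Fintype M), Fintype.card M = q ^ (m * n) →
        ∀ φ : L →+* M, ∀ y z : M, y ≠ 0 → z ≠ 0 →
          (y ^ q + φ δ * y ^ q ^ (2 * r + 1)) * z ^ q ^ (r + 1)
            = (z ^ q + φ δ * z ^ q ^ (2 * r + 1)) * y ^ q ^ (r + 1) →
          (y / z) ^ q = y / z}.Infinite := by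
  obtain ⟨p, e, hp, -, -, rfl⟩ := hq
  have : Fact p.Prime := ⟨hp⟩
  refine Set.infinite_of_injective_forall_mem (f := (n ^ ·))
    (Nat.pow_right_injective (by omega)) fun k => ⟨pow_pos (by omega) k, ?_⟩
  intro M _ _ hcard φ y z _ hz H
  rw [← pow_succ] at hcard
  have : CharP M p := charP_of_card_eq_prime_pow (by rw [hcard, ← pow_mul])
  exact div_pow_eq_self_of_scattered_eq rfl hcard (Nat.Coprime.pow_right _ hgcdrn)
    (Nat.Coprime.pow_left _ hgcdqn)
    ((map_ne_one_iff φ φ.injective).mpr hδ1) (by rw [← map_pow, hδord, map_one]) hz H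

/-- Let q be a power of an odd prime, n > 3 odd with
gcd(n, q - 1) = 1, δ ∈ F_{q^n}^* with δ ≠ 1 and δ^{q-1} = 1, and r a positive
integer with r < n and gcd(r, n) = 1.  Then S(x) = x^q + δx^{q^{2r+1}} is
exceptional scattered of index r + 1: there exist infinitely many positive
integers m such that the map x ↦ x^q + δx^{q^{2r+1}} on F_{q^{mn}} is scattered
of index r + 1, i.e., for all nonzero y, z ∈ F_{q^{mn}},
S(y)·z^{q^{r+1}} = S(z)·y^{q^{r+1}} implies y/z ∈ F_q.

Here F_{q^{mn}} is represented by an arbitrary field M of cardinality q^{m·n}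
together with an embedding φ : F_{q^n} →+* M (which exists since n ∣ m·n), so
that δ is regarded as the element φ(δ) of F_{q^{mn}}; membership of y/z in the
subfield F_q of M is expressed via its characterization as the fixed field of
the q-power Frobenius: (y/z)^q = y/z. -/
theorem stmt16 (q n r : ℕ)
    (hq : ∃ p m : ℕ, p.Prime ∧ Odd p ∧ 0 < m ∧ q = p ^ m)
    (hn : 3 < n) (hodd : Odd n) (hgcdqn : Nat.gcd n (q - 1) = 1)
    (hr : 0 < r) (hrn : r < n) (hgcdrn : Nat.gcd r n = 1)
    (L : Type) [Field L] [Fintype L] (hcard : Fintype.card L = q ^ n)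
    (δ : L) (hδ0 : δ ≠ 0) (hδ1 : δ ≠ 1) (hδord : δ ^ (q - 1) = 1) :
    {m : ℕ | 0 < m ∧
      ∀ (M : Type) (_ : Field M) (_ : Fintype M), Fintype.card M = q ^ (m * n) →
        ∀ φ : L →+* M, ∀ y z : M, y ≠ 0 → z ≠ 0 →
          (y ^ q + φ δ * y ^ q ^ (2 * r + 1)) * z ^ q ^ (r + 1)
            = (z ^ q + φ δ * z ^ q ^ (2 * r + 1)) * y ^ q ^ (r + 1) →
          (y / z) ^ q = y / z}.Infinite :=
  stmt16_general q n r hq hn hgcdqn hgcdrn L δ hδ1 hδord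
end
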